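/- arXiv:1607.08486 — 2 statements merged into one kernel-verified Lean document; each statement's English description precedes it below -/
import Mathlib

section
/- Let I_1(q) = ∑_{d≥1}(q^d/d)binom(2d,d)^2 and T = log q + I_1(q) (so q dT/dq = 1 + q I_1'(q)), and define the formal power series G(q) = (1/12)I_1(q) − (1/12)·log(1 − 16q) − (1/2)·log(q dT/dq). Then G(q) = −(1/3)q − (11/6)q^2 − (124/9)q^3 + O(q^4). -/
open PowerSeries

/-- Let `I₁(q) = ∑_{d≥1}(q^d/d)binom(2d,d)²`, let `L₁ = log(1 - 16q)` and
`L₂ = log(q dT/dq) = log(1 + q·I₁'(q))` be the formal logarithms (characterized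
by vanishing constant term and the logarithmic-derivative ODEs).  Then
`G = (1/12)I₁ - (1/12)L₁ - (1/2)L₂` satisfies
`G = -(1/3)q - (11/6)q² - (124/9)q³ + O(q⁴)`. -/
theorem elliptic_potential_expansion
    (I₁ L₁ L₂ G : PowerSeries ℚ)
    (hI₁ : I₁ = PowerSeries.mk
      (fun d => if d = 0 then 0 else ((Nat.choose (2 * d) d : ℚ)) ^ 2 / d))
    (hL₁0 : PowerSeries.constantCoeff (R := ℚ) L₁ = 0)
    (hL₁ : (1 - PowerSeries.C (R := ℚ) 16 * PowerSeries.X) * PowerSeries.derivativeFun L₁ =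
      - PowerSeries.C (R := ℚ) 16)
    (hL₂0 : PowerSeries.constantCoeff (R := ℚ) L₂ = 0)
    (hL₂ : (1 + PowerSeries.X * PowerSeries.derivativeFun I₁) *
        PowerSeries.derivativeFun L₂ =
      PowerSeries.derivativeFun (PowerSeries.X * PowerSeries.derivativeFun I₁))
    (hG : G = (1/12 : ℚ) • I₁ - (1/12 : ℚ) • L₁ - (1/2 : ℚ) • L₂) :
    PowerSeries.coeff (R := ℚ) 1 G = -(1/3) ∧ PowerSeries.coeff (R := ℚ) 2 G = -(11/6) ∧
      PowerSeries.coeff (R := ℚ) 3 G = -(124/9) := by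
  have hA0 := congrArg (coeff (R := ℚ) 0) hL₁
  have hA1 := congrArg (coeff (R := ℚ) 1) hL₁
  have hA2 := congrArg (coeff (R := ℚ) 2) hL₁
  have hB0 := congrArg (coeff (R := ℚ) 0) hL₂
  have hB1 := congrArg (coeff (R := ℚ) 1) hL₂
  have hB2 := congrArg (coeff (R := ℚ) 2) hL₂
  have hD : ∀ f : ℚ⟦X⟧, f.derivativeFun = d⁄dX ℚ f := fun _ => rfl
  simp only [hI₁, hD, coeff_mul, Finset.Nat.sum_antidiagonal_eq_sum_range_succ_mk,
    Finset.sum_range_succ, Finset.sum_range_zero, coeff_derivativeFun, coeff_mk,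
    map_sub, map_add, map_neg, coeff_one, coeff_C, coeff_X, sub_mul, one_mul,
    coeff_succ_C, coeff_zero_C] at hA0 hA1 hA2 hB0 hB1 hB2
  norm_num [Nat.choose] at hA0 hA1 hA2 hB0 hB1 hB2
  subst hG hI₁
  simp only [map_sub, map_smul, coeff_mk, smul_eq_mul]
  norm_num [Nat.choose]
  refine ⟨?_, ?_, ?_⟩ <;> nlinarith [hA0, hA1, hA2, hB0, hB1, hB2]
end

section
/- Let n = 4 and λ_1, λ_2, λ_3, λ_4 be the fourth roots of unity. In ℚ[H]/(H^4 − 1)[[q, 1/z]], for each d ≥ 1, the coefficient of q^d in the series ∑_{d≥0} q^d · (∏_{k=1}^{2d}(2H + kz) · ∏_{k=0}^{2d−1}(−2H − kz)) / (∏_{i=1}^{4} ∏_{k=1}^{d}(H − λ_i + kz)), expanded in powers of 1/z, has z^0-coefficient 0 in its H^0-component, and its z^{−1} H^1-component equals (1/d)·binom(2d,d)^2. -/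
/-!
Put `w = 1/z`. Since `2d` is even, `∏_{k<2d} (-2Hw - k) = ∏_{k<2d} (2Hw + k)`, whose factor
`k = 0` is `2Hw`; all other factors of the numerator, and all factors of the denominator, have
nonzero constant term in `ℚ[H]`. Hence `F = N/D` vanishes at `w = 0`, and its `w`-coefficient is
`(N/w)(0) / D(0) = 2H · (2d)! · (2d-1)! / (d!)⁴ = H · binom(2d,d)² / d`, which is already reduced
modulo `H⁴ - 1`.
-/

open Finset PowerSeries
open scoped Nat

namespace PowerSeries

section NoZeroDivisors

variable {R : Type*} [CommSemiring R] [NoZeroDivisors R] {F D M : R⟦X⟧}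

theorem constantCoeff_eq_zero_of_mul_eq_X_mul (hD : constantCoeff D ≠ 0) (h : F * D = X * M) :
    constantCoeff F = 0 := by
  have h0 := congrArg constantCoeff h
  simpa [hD] using h0

theorem coeff_one_mul_constantCoeff_of_mul_eq_X_mul (hD : constantCoeff D ≠ 0)
    (h : F * D = X * M) : coeff 1 F * constantCoeff D = constantCoeff M := by
  have h1 := congrArg (coeff 1) h
  rw [coeff_one_mul, constantCoeff_eq_zero_of_mul_eq_X_mul hD h, mul_zero, add_zero] at h1
  simpa using h1

end NoZeroDivisors

variable {R : Type*} [CommRing R]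

theorem constantCoeff_prod_add_natCast_succ {a : R⟦X⟧} (ha : constantCoeff a = 0) (n : ℕ) :
    constantCoeff (∏ k ∈ range n, (a + ((k + 1 : ℕ) : R⟦X⟧))) = (n ! : R) := by
  simp [map_prod, ha, ← prod_range_add_one_eq_factorial]

theorem constantCoeff_prod_add_natCast_succ_pow_sub_X_pow {a : R⟦X⟧} (ha : constantCoeff a = 0)
    {e : ℕ} (he : e ≠ 0) (n : ℕ) :
    constantCoeff (∏ k ∈ range n, ((a + ((k + 1 : ℕ) : R⟦X⟧)) ^ e - X ^ e)) = (n ! : R) ^ e := by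
  simp [map_prod, ha, he, prod_pow, ← prod_range_add_one_eq_factorial]

end PowerSeries

namespace Finset

variable {R : Type*} [CommRing R]

theorem prod_range_neg_sub_natCast_of_even (a : R) {n : ℕ} (hn : Even n) :
    ∏ k ∈ range n, (-a - k) = ∏ k ∈ range n, (a + k) := by
  simp_rw [sub_eq_add_neg, ← neg_add, prod_neg, card_range, hn.neg_one_pow, one_mul]

theorem prod_range_add_natCast_eq_mul (a : R) {n : ℕ} (hn : n ≠ 0) :
    ∏ k ∈ range n, (a + k) = a * ∏ k ∈ range (n - 1), (a + ((k + 1 : ℕ) : R)) := by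
  obtain ⟨m, rfl⟩ := Nat.exists_eq_succ_of_ne_zero hn
  simp [prod_range_succ', mul_comm]

end Finset

namespace Polynomial

theorem eq_C_div_mul_X_of_mul_C_eq {K : Type*} [Field K] {p : K[X]} {a b : K} (ha : a ≠ 0)
    (h : p * C a = C b * X) : p = C (b / a) * X := by
  have h' := congrArg (· * C a⁻¹) h
  simp only [mul_assoc, ← C_mul, mul_inv_cancel₀ ha, C_1, mul_one] at h'
  rw [h', div_eq_mul_inv, C_mul]
  ring

theorem coeff_one_C_mul_X_modByMonic_X_pow_sub_one {R : Type*} [CommRing R] [Nontrivial R]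
    (c : R) {n : ℕ} (hn : 1 < n) : ((C c * X) %ₘ (X ^ n - 1)).coeff 1 = c := by
  have hmonic : (X ^ n - 1 : R[X]).Monic := by
    simpa using monic_X_pow_sub_C (1 : R) (by omega : n ≠ 0)
  have hdeg : (C c * X).degree < (X ^ n - 1 : R[X]).degree := by
    rw [show (X ^ n - 1 : R[X]) = X ^ n - C 1 by simp, degree_X_pow_sub_C (by omega)]
    exact (degree_C_mul_X_le c).trans_lt (by exact_mod_cast hn)
  rw [(modByMonic_eq_self_iff hmonic).mpr hdeg, coeff_C_mul_X, if_pos rfl]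

end Polynomial

theorem two_mul_factorial_mul_factorial_pred_div_eq_choose_sq_div {K : Type*} [Field K]
    [CharZero K] {d : ℕ} (hd : d ≠ 0) :
    2 * ((2 * d)! : K) * ((2 * d - 1)! : K) / (d ! : K) ^ 4 = ((2 * d).choose d : K) ^ 2 / d := by
  have hfact : ((2 * d)! : K) = 2 * d * (2 * d - 1)! := by
    rw [← Nat.mul_factorial_pred (by omega : 2 * d ≠ 0)]
    push_cast
    ring
  have hchoose : ((2 * d)! : K) = (2 * d).choose d * d ! * d ! := by
    rw [← Nat.choose_mul_factorial_mul_factorial (by omega : d ≤ 2 * d),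
      show 2 * d - d = d by omega]
    push_cast
    ring
  rw [div_eq_div_iff (pow_ne_zero _ (by exact_mod_cast d.factorial_ne_zero))
    (by exact_mod_cast hd)]
  linear_combination (-((2 * d)! : K)) * hfact +
    (((2 * d)! : K) + (2 * d).choose d * (d ! : K) ^ 2) * hchoose

/-- For the local Calabi–Yau `Tot(O(-2,-2)) → ℙ¹×ℙ¹`, with the equivariant
parameters specialized to the fourth roots of unity, the degree-`d ≥ 1` term of
the I-function is `N_d/D_d` with
`N_d = ∏_{k=1}^{2d}(2H + kz)·∏_{k=0}^{2d-1}(-2H - kz)` and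
`D_d = ∏_{k=1}^{d}((H + kz)⁴ - 1)`.  Writing `w = 1/z`, this equals `Ñ_d/D̃_d`
with `Ñ_d(w) = ∏_{k=1}^{2d}(2Hw + k)·∏_{k=0}^{2d-1}(-2Hw - k)` and
`D̃_d(w) = ∏_{k=1}^{d}((Hw + k)⁴ - w⁴)`, a well-defined power series in `w` with
polynomial coefficients in `H`.  Reducing the coefficients mod `H⁴ - 1`, the
`w⁰`-coefficient has vanishing `H⁰`-component, and the `w¹`-coefficient (the
`z^{-1}`-term) has `H¹`-component `(1/d)·binom(2d,d)²`. -/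
theorem local_P1xP1_I_function_coeffs
    (H W : PowerSeries (Polynomial ℚ))
    (hH : H = PowerSeries.C (R := Polynomial ℚ) Polynomial.X)
    (hW : W = PowerSeries.X)
    (N D : ℕ → PowerSeries (Polynomial ℚ))
    (hN : ∀ d, N d =
      (∏ k ∈ Finset.range (2 * d), (2 * H * W + ((k : ℕ) + 1 : ℕ))) *
      (∏ k ∈ Finset.range (2 * d), (-(2 * H * W) - (k : ℕ))))
    (hD : ∀ d, D d = ∏ k ∈ Finset.range d, ((H * W + ((k : ℕ) + 1 : ℕ)) ^ 4 - W ^ 4)) :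
    ∀ d : ℕ, 1 ≤ d → ∀ F : PowerSeries (Polynomial ℚ), F * D d = N d →
      (((PowerSeries.coeff (R := Polynomial ℚ) 0 F) %ₘ
          (Polynomial.X ^ 4 - 1)).coeff 0 = 0) ∧
      (((PowerSeries.coeff (R := Polynomial ℚ) 1 F) %ₘ
          (Polynomial.X ^ 4 - 1)).coeff 1 = ((Nat.choose (2 * d) d : ℚ)) ^ 2 / d) := by
  intro d hd F hF
  subst hH hW
  set a := 2 * C Polynomial.X * (X : (Polynomial ℚ)⟦X⟧)
  set M := 2 * C Polynomial.X * (∏ k ∈ range (2 * d), (a + ((k + 1 : ℕ) : (Polynomial ℚ)⟦X⟧))) *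
    ∏ k ∈ range (2 * d - 1), (a + ((k + 1 : ℕ) : (Polynomial ℚ)⟦X⟧))
  have hFM : F * D d = X * M := by
    rw [hF, hN, prod_range_neg_sub_natCast_of_even a (even_two_mul d),
      prod_range_add_natCast_eq_mul a (by omega)]
    ring
  have ha : constantCoeff a = 0 := by simp [a]
  have hD0 : constantCoeff (D d) = Polynomial.C ((d ! : ℚ) ^ 4) := by
    rw [hD, constantCoeff_prod_add_natCast_succ_pow_sub_X_pow (by simp) four_ne_zero]
    simp
  have hD0_ne : constantCoeff (D d) ≠ 0 := by
    rw [hD0, Ne, Polynomial.C_eq_zero]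
    positivity
  have hM0 : constantCoeff M = Polynomial.C (2 * (2 * d)! * (2 * d - 1)! : ℚ) * Polynomial.X := by
    simp only [M, map_mul, map_ofNat, constantCoeff_C, constantCoeff_prod_add_natCast_succ ha]
    simp only [map_natCast]
    ring
  constructor
  · rw [coeff_zero_eq_constantCoeff_apply, constantCoeff_eq_zero_of_mul_eq_X_mul hD0_ne hFM]
    simp
  · have key := coeff_one_mul_constantCoeff_of_mul_eq_X_mul hD0_ne hFM
    rw [hD0, hM0] at key
    rw [Polynomial.eq_C_div_mul_X_of_mul_C_eq (by positivity) key,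
      Polynomial.coeff_one_C_mul_X_modByMonic_X_pow_sub_one _ (by norm_num),
      two_mul_factorial_mul_factorial_pred_div_eq_choose_sq_div (by omega)]
end
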